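/- arXiv:1406.7105 — 2 statements merged into one kernel-verified Lean document; each statement's English description precedes it below -/
import Mathlib

section
/- Let π be a bivector field on a smooth manifold M whose rank at every point is at most 2 and which satisfies the Jacobi identity [π,π] = 0 (i.e. is Poisson). Then for any nowhere-vanishing smooth function k: M → ℝ, the rescaled bivector kπ also satisfies [π₁,π₁] = 0 with π₁ = kπ, i.e. kπ is Poisson. -/
/-- Partial derivative of `f : ℝⁿ → ℝ` in the `s`-th coordinate direction at `q`. -/
noncomputable def pd {n : ℕ} (s : Fin n) (f : (Fin n → ℝ) → ℝ) (q : Fin n → ℝ) : ℝ :=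
  fderiv ℝ f q (Pi.single s 1)

/-- The coordinate form of the Jacobi identity [π,π] = 0 for a bivector field given by the
antisymmetric matrix of coefficients `P`. -/
def JacobiIdentity {n : ℕ} (P : (Fin n → ℝ) → Matrix (Fin n) (Fin n) ℝ) : Prop :=
  ∀ (q : Fin n → ℝ) (i j l : Fin n),
    ∑ s : Fin n,
      (P q s l * pd s (fun x => P x i j) q +
       P q s i * pd s (fun x => P x j l) q +
       P q s j * pd s (fun x => P x l i) q) = 0

/-- The determinant of an antisymmetric `4 × 4` real matrix is the square of its Pfaffian. -/
lemma det_anti4 (B : Matrix (Fin 4) (Fin 4) ℝ) (hB : ∀ a b, B b a = -B a b) :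
    B.det = (B 0 1 * B 2 3 - B 0 2 * B 1 3 + B 0 3 * B 1 2)^2 := by
  have h0 : ∀ a, B a a = 0 := fun a => by have := hB a a; linarith
  simp only [Matrix.det_succ_row_zero, Fin.sum_univ_succ, Fin.sum_univ_zero]
  simp only [Fin.isValue, Matrix.submatrix_apply]
  norm_num [Fin.succAbove, Fin.lt_def]
  simp only [show (Fin.succ 2 : Fin 4) = 3 from rfl, show (Fin.castSucc 2 : Fin 4) = 2 from rfl,
    hB 0 1, hB 0 2, hB 0 3, hB 1 2, hB 1 3, hB 2 3, h0]
  ring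

/-- Plücker relation: an antisymmetric matrix of rank at most `2` has vanishing `4 × 4`
Pfaffians. -/
lemma pluecker {n : ℕ} (A : Matrix (Fin n) (Fin n) ℝ) (hA : ∀ a b, A b a = -A a b)
    (hrank : A.rank ≤ 2) (s i j l : Fin n) :
    A s i * A j l + A s j * A l i + A s l * A i j = 0 := by
  set f : Fin 4 → Fin n := ![s, i, j, l] with hf
  set B : Matrix (Fin 4) (Fin 4) ℝ := A.submatrix f f with hBdef
  have hrankB : B.rank ≤ 2 := by
    have h1 : B = ((1 : Matrix (Fin n) (Fin n) ℝ).submatrix f (Equiv.refl (Fin n))) *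
        (A * ((1 : Matrix (Fin n) (Fin n) ℝ).submatrix (Equiv.refl (Fin n)) f)) := by
      rw [Matrix.mul_submatrix_one, Matrix.one_submatrix_mul]
      simp [hBdef]
    calc B.rank ≤ (A * ((1 : Matrix (Fin n) (Fin n) ℝ).submatrix (Equiv.refl (Fin n)) f)).rank := by
          rw [h1]; exact Matrix.rank_mul_le_right _ _
      _ ≤ A.rank := Matrix.rank_mul_le_left _ _
      _ ≤ 2 := hrank
  have hdet : B.det = 0 := by
    by_contra h
    have : B.rank = 4 := by
      have := Matrix.rank_of_isUnit B ((Matrix.isUnit_iff_isUnit_det B).mpr (isUnit_iff_ne_zero.mpr h))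
      simpa using this
    omega
  have hBanti : ∀ a b, B b a = -B a b := fun a b => hA (f a) (f b)
  have := det_anti4 B hBanti
  rw [hdet] at this
  have h2 : B 0 1 * B 2 3 - B 0 2 * B 1 3 + B 0 3 * B 1 2 = 0 := by
    have := sq_eq_zero_iff.mp this.symm
    linarith
  have e01 : B 0 1 = A s i := rfl
  have e23 : B 2 3 = A j l := rfl
  have e02 : B 0 2 = A s j := rfl
  have e13 : B 1 3 = A i l := rfl
  have e03 : B 0 3 = A s l := rfl
  have e12 : B 1 2 = A i j := rfl
  rw [e01, e23, e02, e13, e03, e12] at h2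
  linear_combination h2 + A s j * hA l i

/-- Leibniz rule for the coordinate partial derivative `pd`. -/
lemma pd_mul {n : ℕ} (s : Fin n) (f g : (Fin n → ℝ) → ℝ) (q : Fin n → ℝ)
    (hf : DifferentiableAt ℝ f q) (hg : DifferentiableAt ℝ g q) :
    pd s (fun x => f x * g x) q = f q * pd s g q + pd s f q * g q := by
  unfold pd
  rw [fderiv_fun_mul hf hg]
  simp [smul_eq_mul]
  ring

/-- If π is a Poisson bivector field of rank at most 2 at every point, then kπ is Poisson for
any nowhere-vanishing smooth function k. -/
theorem rescale_rank_two_poisson {n : ℕ} (P : (Fin n → ℝ) → Matrix (Fin n) (Fin n) ℝ)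
    (hPsmooth : ∀ i j, ContDiff ℝ (⊤ : ℕ∞) (fun x => P x i j))
    (hPanti : ∀ q, (P q).transpose = -(P q))
    (hPrank : ∀ q, (P q).rank ≤ 2)
    (hPjac : JacobiIdentity P)
    (k : (Fin n → ℝ) → ℝ) (hk : ContDiff ℝ (⊤ : ℕ∞) k) (hk0 : ∀ q, k q ≠ 0) :
    JacobiIdentity (fun q => k q • P q) := by
  intro q i j l
  have hA : ∀ a b, P q b a = -P q a b := fun a b => by
    have := congrFun (congrFun (hPanti q) a) b
    simpa [Matrix.transpose_apply] using this
  have hkd : DifferentiableAt ℝ k q := hk.differentiable (by simp) q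
  have hPd : ∀ a b, DifferentiableAt ℝ (fun x => P x a b) q :=
    fun a b => (hPsmooth a b).differentiable (by simp) q
  have hentry : ∀ (x : Fin n → ℝ) (a b : Fin n), (k x • P x) a b = k x * P x a b :=
    fun x a b => rfl
  simp only [hentry]
  have key : ∀ s : Fin n,
      k q * P q s l * pd s (fun x => k x * P x i j) q +
      k q * P q s i * pd s (fun x => k x * P x j l) q +
      k q * P q s j * pd s (fun x => k x * P x l i) q =
      k q ^ 2 * (P q s l * pd s (fun x => P x i j) q +
        P q s i * pd s (fun x => P x j l) q +
        P q s j * pd s (fun x => P x l i) q) := by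
    intro s
    rw [pd_mul s k _ q hkd (hPd i j), pd_mul s k _ q hkd (hPd j l),
      pd_mul s k _ q hkd (hPd l i)]
    have hpl := pluecker (P q) hA (hPrank q) s i j l
    linear_combination (k q * pd s k q) * hpl
  rw [Finset.sum_congr rfl (fun s _ => key s), ← Finset.mul_sum, hPjac q i j l, mul_zero]
end

section
/- On ℝ⁴ with coordinates (x₁,y₁,x₂,y₂), the bivector of the Lefschetz model equals the bivector determined by {g,h} dx₁∧dy₁∧dx₂∧dy₂ = dg ∧ dh ∧ dF₁ ∧ dF₂ with F₁ = x₁²−y₁²+x₂²−y₂², F₂ = 2(x₁y₁+x₂y₂), up to an overall nonzero constant factor. Specifically, computing the wedge products yields coefficient {x₁,y₁} proportional to x₂²+y₂², {x₂,y₂} proportional to x₁²+y₁², {x₁,y₂} proportional to −(y₁y₂+x₁x₂), {y₁,x₂} proportional to x₁x₂+y₁y₂, {y₁,y₂} and {x₁,x₂} proportional to y₁x₂−x₁y₂, all with the same constant of proportionality. -/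
/-- Gradient row of a function on ℝ⁴ at `q`. -/
noncomputable def gradRow (f : (Fin 4 → ℝ) → ℝ) (q : Fin 4 → ℝ) : Fin 4 → ℝ :=
  fun j => fderiv ℝ f q (Pi.single j 1)

/-- The bracket on ℝ⁴ defined by {g,h} dx₁∧dy₁∧dx₂∧dy₂ = dg ∧ dh ∧ dF₁ ∧ dF₂ with
F₁ = x₁²−y₁²+x₂²−y₂² and F₂ = 2(x₁y₁+x₂y₂); coordinates (x₁,y₁,x₂,y₂) = (q 0,q 1,q 2,q 3). -/
noncomputable def lefDetBracket (g h : (Fin 4 → ℝ) → ℝ) (q : Fin 4 → ℝ) : ℝ :=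
  Matrix.det (Matrix.of
    ![gradRow g q, gradRow h q,
      gradRow (fun x => x 0 ^ 2 - x 1 ^ 2 + x 2 ^ 2 - x 3 ^ 2) q,
      gradRow (fun x => 2 * (x 0 * x 1 + x 2 * x 3)) q])

/-!
The gradient of a coordinate function is a standard basis vector, so the coordinate bracket
`{xᵢ, xₖ}` is, up to sign, the 2 × 2 minor of the rows `∇F₁ = 2 (x₁, -y₁, x₂, -y₂)` and
`∇F₂ = 2 (y₁, x₁, y₂, x₂)` in the two complementary columns. Each such minor is `4` times the
corresponding coefficient of the Lefschetz bivector.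
-/

theorem gradRow_coord (i : Fin 4) (q : Fin 4 → ℝ) :
    gradRow (fun x => x i) q = Pi.single i 1 := by
  ext j
  simp [gradRow, (hasFDerivAt_apply i q).fderiv, Pi.single_apply, eq_comm]

theorem gradRow_lefF₁ (q : Fin 4 → ℝ) :
    gradRow (fun x => x 0 ^ 2 - x 1 ^ 2 + x 2 ^ 2 - x 3 ^ 2) q
      = ![2 * q 0, -(2 * q 1), 2 * q 2, -(2 * q 3)] := by
  ext j
  fin_cases j <;>
    simp (disch := fun_prop) [gradRow, fderiv_fun_sub, fderiv_fun_add, fderiv_fun_pow,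
      fderiv_apply, Pi.single_apply]

theorem gradRow_lefF₂ (q : Fin 4 → ℝ) :
    gradRow (fun x => 2 * (x 0 * x 1 + x 2 * x 3)) q
      = ![2 * q 1, 2 * q 0, 2 * q 3, 2 * q 2] := by
  ext j
  fin_cases j <;>
    simp (disch := fun_prop) [gradRow, fderiv_fun_add, fderiv_fun_mul, fderiv_apply,
      Pi.single_apply]

theorem lefDetBracket_coord_coord (i k : Fin 4) (q : Fin 4 → ℝ) :
    lefDetBracket (fun x => x i) (fun x => x k) q
      = Matrix.det (Matrix.of ![Pi.single i 1, Pi.single k 1,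
          ![2 * q 0, -(2 * q 1), 2 * q 2, -(2 * q 3)], ![2 * q 1, 2 * q 0, 2 * q 3, 2 * q 2]]) := by
  rw [lefDetBracket, gradRow_coord, gradRow_coord, gradRow_lefF₁, gradRow_lefF₂]

/-- The coordinate brackets of the determinant-defined bracket reproduce, up to a common
nonzero constant, the coefficients of the Lefschetz-model bivector. -/
theorem lefDetBracket_coords :
    ∃ c : ℝ, c ≠ 0 ∧ ∀ q : Fin 4 → ℝ,
      lefDetBracket (fun x => x 0) (fun x => x 1) q = c * (q 2 ^ 2 + q 3 ^ 2) ∧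
      lefDetBracket (fun x => x 2) (fun x => x 3) q = c * (q 0 ^ 2 + q 1 ^ 2) ∧
      lefDetBracket (fun x => x 0) (fun x => x 3) q = c * (-(q 1 * q 3 + q 0 * q 2)) ∧
      lefDetBracket (fun x => x 1) (fun x => x 2) q = c * (q 0 * q 2 + q 1 * q 3) ∧
      lefDetBracket (fun x => x 1) (fun x => x 3) q = c * (q 1 * q 2 - q 0 * q 3) ∧
      lefDetBracket (fun x => x 0) (fun x => x 2) q = c * (q 1 * q 2 - q 0 * q 3) := by
  refine ⟨4, four_ne_zero, fun q => ⟨?_, ?_, ?_, ?_, ?_, ?_⟩⟩ <;>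
  · rw [lefDetBracket_coord_coord]
    simp [Matrix.det_succ_row_zero, Fin.sum_univ_succ, Fin.succAbove, Pi.single_apply]
    ring
end
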